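/- arXiv:1311.7292 — 2 statements merged into one kernel-verified Lean document; each statement's English description precedes it below -/
import Mathlib

section
/- Let V be a real normed vector space and let γ, δ : [0,1] → V be continuously differentiable paths with γ(1) = δ(0), F(γ) > 0 and F(δ) > 0. Then the norm of the energy-minimizing concatenation satisfies F(c_min(γ,δ)) = F(γ) + F(δ), i.e. (∫₀¹ ‖(c_min(γ,δ))'(t)‖² dt)^{1/2} = F(γ) + F(δ), where the derivative of c_min(γ,δ) is defined except at the single break time. -/
variable {V : Type*} [NormedAddCommGroup V] [NormedSpace ℝ V]

/-- The energy `E(γ) = ∫₀¹ ‖γ'(t)‖² dt` of a path `γ : [0,1] → V`, where the derivative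
is the (almost everywhere defined) derivative within `[0,1]`. -/
noncomputable def pathEnergy (γ : ℝ → V) : ℝ :=
  ∫ t in (0 : ℝ)..1, ‖derivWithin γ (Set.Icc (0 : ℝ) 1) t‖ ^ 2

/-- The `L²`-norm `F(γ) = E(γ)^{1/2}` of a path `γ : [0,1] → V`. -/
noncomputable def pathNorm (γ : ℝ → V) : ℝ :=
  Real.sqrt (pathEnergy γ)

/-- The concatenation at time `s` of two paths `γ, δ : [0,1] → V`:
`c_s(γ,δ)(t) = γ(t/s)` for `0 ≤ t ≤ s` and `c_s(γ,δ)(t) = δ((t−s)/(1−s))` for `s ≤ t ≤ 1`. -/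
noncomputable def concatAt (s : ℝ) (γ δ : ℝ → V) : ℝ → V :=
  fun t => if t ≤ s then γ (t / s) else δ ((t - s) / (1 - s))

/-- The energy-minimizing concatenation `c_min(γ,δ) = c_{s_min}(γ,δ)` with
`s_min = F(γ)/(F(γ)+F(δ))`. -/
noncomputable def concatMin (γ δ : ℝ → V) : ℝ → V :=
  concatAt (pathNorm γ / (pathNorm γ + pathNorm δ)) γ δ

/-! Traversing a path in time `ℓ` instead of `1` multiplies its speed by `1 / ℓ`, so its energy
over that time is `E / ℓ`. Hence `E(c_s(γ, δ)) = E(γ) / s + E(δ) / (1 - s)`, which at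
`s = F(γ) / (F(γ) + F(δ))` equals `(F(γ) + F(δ))²`. -/

open Set MeasureTheory intervalIntegral

lemma pathEnergy_nonneg (γ : ℝ → V) : 0 ≤ pathEnergy γ :=
  intervalIntegral.integral_nonneg zero_le_one fun _ _ => sq_nonneg _

lemma sq_pathNorm (γ : ℝ → V) : pathNorm γ ^ 2 = pathEnergy γ :=
  Real.sq_sqrt (pathEnergy_nonneg γ)

lemma hasDerivAt_comp_affine_of_mem_Ioo {f : ℝ → V} (hf : DifferentiableOn ℝ f (Icc 0 1))
    {a c t : ℝ} (ht : (t - a) / c ∈ Ioo 0 1) :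
    HasDerivAt (fun x => f ((x - a) / c)) (c⁻¹ • derivWithin f (Icc 0 1) ((t - a) / c)) t := by
  have hnhds : Icc (0 : ℝ) 1 ∈ nhds ((t - a) / c) := Icc_mem_nhds ht.1 ht.2
  have hf' : HasDerivAt f (derivWithin f (Icc 0 1) ((t - a) / c)) ((t - a) / c) := by
    rw [derivWithin_of_mem_nhds hnhds]
    exact ((hf _ (Ioo_subset_Icc_self ht)).differentiableAt hnhds).hasDerivAt
  have haffine : HasDerivAt (fun x : ℝ => (x - a) / c) c⁻¹ t := by
    simpa [one_div] using ((hasDerivAt_id t).sub_const a).div_const c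
  exact hf'.scomp t haffine

lemma integral_norm_sq_derivWithin_of_eqOn_Ioo {p f : ℝ → V} {a b : ℝ}
    (ha : 0 ≤ a) (hab : a < b) (hb : b ≤ 1) (hf : ContDiffOn ℝ 1 f (Icc 0 1))
    (hp : EqOn p (fun x => f ((x - a) / (b - a))) (Ioo a b)) :
    IntervalIntegrable (fun t => ‖derivWithin p (Icc 0 1) t‖ ^ 2) volume a b ∧
      ∫ t in a..b, ‖derivWithin p (Icc 0 1) t‖ ^ 2 = pathEnergy f / (b - a) := by
  have hba : 0 < b - a := sub_pos.2 hab
  set g : ℝ → ℝ := fun u => ‖derivWithin f (Icc 0 1) u‖ ^ 2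
  have hmaps : MapsTo (fun x : ℝ => (x - a) / (b - a)) (Icc a b) (Icc 0 1) := fun x hx =>
    ⟨div_nonneg (sub_nonneg.2 hx.1) hba.le, (div_le_one hba).2 (by linarith [hx.2])⟩
  have hderiv : EqOn (fun t => ‖derivWithin p (Icc 0 1) t‖ ^ 2)
      (fun t => ((b - a)⁻¹) ^ 2 * g ((t - a) / (b - a))) (uIoo a b) := by
    intro t ht
    rw [uIoo_of_le hab.le] at ht
    have hmem : (t - a) / (b - a) ∈ Ioo 0 1 :=
      ⟨div_pos (sub_pos.2 ht.1) hba, (div_lt_one hba).2 (by linarith [ht.2])⟩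
    have hp' : p =ᶠ[nhds t] fun x => f ((x - a) / (b - a)) :=
      Filter.eventuallyEq_of_mem (Ioo_mem_nhds ht.1 ht.2) hp
    dsimp only
    rw [derivWithin_of_mem_nhds (Icc_mem_nhds (ha.trans_lt ht.1) (ht.2.trans_le hb)),
      ((hasDerivAt_comp_affine_of_mem_Ioo (hf.differentiableOn one_ne_zero)
        hmem).congr_of_eventuallyEq hp').deriv, norm_smul, mul_pow, Real.norm_eq_abs, sq_abs]
  have hgc : ContinuousOn g (Icc 0 1) :=
    ((hf.continuousOn_derivWithin (uniqueDiffOn_Icc zero_lt_one) le_rfl).norm).pow 2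
  have hint : IntervalIntegrable (fun t => ((b - a)⁻¹) ^ 2 * g ((t - a) / (b - a))) volume a b :=
    (continuousOn_const.mul (hgc.comp (by fun_prop) hmaps)).intervalIntegrable_of_Icc hab.le
  refine ⟨hint.congr_uIoo hderiv.symm, ?_⟩
  rw [integral_congr_uIoo hderiv, intervalIntegral.integral_const_mul,
    integral_comp_sub_right (fun x => g (x / (b - a))), integral_comp_div g hba.ne', sub_self,
    zero_div, div_self hba.ne', smul_eq_mul, pathEnergy]
  field_simp
  rfl

lemma pathEnergy_concatAt {γ δ : ℝ → V} {s : ℝ} (hs0 : 0 < s) (hs1 : s < 1)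
    (hγ : ContDiffOn ℝ 1 γ (Icc 0 1)) (hδ : ContDiffOn ℝ 1 δ (Icc 0 1)) :
    pathEnergy (concatAt s γ δ) = pathEnergy γ / s + pathEnergy δ / (1 - s) := by
  obtain ⟨hint₁, hE₁⟩ := integral_norm_sq_derivWithin_of_eqOn_Ioo le_rfl hs0 hs1.le hγ
    (p := concatAt s γ δ) fun t ht => by simp [concatAt, ht.2.le]
  obtain ⟨hint₂, hE₂⟩ := integral_norm_sq_derivWithin_of_eqOn_Ioo hs0.le hs1 le_rfl hδ
    (p := concatAt s γ δ) fun t ht => by simp [concatAt, not_le.2 ht.1]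
  rw [pathEnergy, ← integral_add_adjacent_intervals hint₁ hint₂, hE₁, hE₂, sub_zero]

lemma sq_div_add_sq_div_one_sub_eq {a b : ℝ} (ha : 0 < a) (hb : 0 < b) :
    a ^ 2 / (a / (a + b)) + b ^ 2 / (1 - a / (a + b)) = (a + b) ^ 2 := by
  have hab : a + b ≠ 0 := by positivity
  rw [one_sub_div hab, add_sub_cancel_left]
  field_simp

theorem stmt_0_general (γ δ : ℝ → V)
    (hγ : ContDiffOn ℝ 1 γ (Set.Icc 0 1)) (hδ : ContDiffOn ℝ 1 δ (Set.Icc 0 1))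
    (hFγ : 0 < pathNorm γ) (hFδ : 0 < pathNorm δ) :
    pathNorm (concatMin γ δ) = pathNorm γ + pathNorm δ := by
  have hs0 : 0 < pathNorm γ / (pathNorm γ + pathNorm δ) := by positivity
  have hs1 : pathNorm γ / (pathNorm γ + pathNorm δ) < 1 :=
    (div_lt_one (by positivity)).2 (by linarith)
  rw [pathNorm, concatMin, pathEnergy_concatAt hs0 hs1 hγ hδ, ← sq_pathNorm γ,
    ← sq_pathNorm δ, sq_div_add_sq_div_one_sub_eq hFγ hFδ, Real.sqrt_sq (by positivity)]

/-- If `γ, δ : [0,1] → V` are continuously differentiable paths with `γ(1) = δ(0)`,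
`F(γ) > 0` and `F(δ) > 0`, then the norm of the energy-minimizing concatenation satisfies
`F(c_min(γ,δ)) = F(γ) + F(δ)`. -/
theorem stmt_0 (γ δ : ℝ → V)
    (hγ : ContDiffOn ℝ 1 γ (Set.Icc 0 1)) (hδ : ContDiffOn ℝ 1 δ (Set.Icc 0 1))
    (hconc : γ 1 = δ 0) (hFγ : 0 < pathNorm γ) (hFδ : 0 < pathNorm δ) :
    pathNorm (concatMin γ δ) = pathNorm γ + pathNorm δ :=
  stmt_0_general γ δ hγ hδ hFγ hFδ
end

section
/- Let n ≡ 3 (mod 4). Let A be the quotient of the free unital associative ℤ/2-algebra ⟨H,S,Y⟩ on three generators by the two-sided ideal generated by the elements HS + SH + 1, HY + YH, SY + YS, S², and H^{n+1}. Then the images in A of the monomials H^a S^ε Y^k, for 0 ≤ a ≤ n, ε ∈ {0,1}, k ≥ 0, form a basis of A as a ℤ/2-vector space. (This is the additive structure underlying the presentation of the path homology algebra ℍ_·(P_n) for n ≡ 3 (mod 4), where H, S, Y have degrees −1, 1, n respectively.) -/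
/-- The free unital associative `ℤ/2`-algebra `⟨H, S, Y⟩` on three generators. -/
abbrev FreeHSY : Type := FreeAlgebra (ZMod 2) (Fin 3)

/-- The generator `H`. -/
noncomputable def genH : FreeHSY := FreeAlgebra.ι (ZMod 2) 0
/-- The generator `S`. -/
noncomputable def genS : FreeHSY := FreeAlgebra.ι (ZMod 2) 1
/-- The generator `Y`. -/
noncomputable def genY : FreeHSY := FreeAlgebra.ι (ZMod 2) 2

/-- The relations `HS + SH + 1 = 0`, `HY + YH = 0`, `SY + YS = 0`, `S² = 0`, `H^{n+1} = 0`
(for `n ≡ 3 (mod 4)`); quotienting by this relation is quotienting by the two-sided ideal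
generated by the corresponding elements. -/
inductive pathRel (n : ℕ) : FreeHSY → FreeHSY → Prop
  | hs : pathRel n (genH * genS + genS * genH + 1) 0
  | hy : pathRel n (genH * genY + genY * genH) 0
  | sy : pathRel n (genS * genY + genY * genS) 0
  | s2 : pathRel n (genS * genS) 0
  | hpow : pathRel n (genH ^ (n + 1)) 0

/-- The quotient algebra `A = ⟨H,S,Y⟩ / (HS+SH+1, HY+YH, SY+YS, S², H^{n+1})`. -/
abbrev PathAlg (n : ℕ) : Type := RingQuot (pathRel n)

/-!
The relations rewrite every word in `H, S, Y` into the normal form `H^a S^ε Y^k`: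
`S H^a = H^a S + a H^(a-1)`, `S² = 0`, `H^(n+1) = 0` and `Y` is central. So the span of the
normal monomials is stable under left multiplication by the generators and contains `1`,
hence is everything.

For independence, `A` acts on `V = R[T]/(T^(n+1)) ⊗ Λ[S]` over `R = 𝔽₂[X]`: `H` by `T`,
`S` by `∂/∂T + S∧` and `Y` by the scalar `X`. Then `HS + SH = 1` is the Leibniz rule, which
survives the truncation because `(n + 1) T^n = 0` for odd `n`, and `S² = ∂² = 0` in
characteristic two. The monomial `H^a S^ε Y^k` sends `1` to `X^k T^a S^ε`, and these vectors
are linearly independent over `𝔽₂`.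
-/

section GeneratingSet

variable {R A : Type*} [CommSemiring R] [Semiring A] [Algebra R A]

theorem Submodule.span_eq_top_of_mul_mem {s t : Set A} (hs : Algebra.adjoin R s = ⊤)
    (one_mem : 1 ∈ span R t) (mul_mem : ∀ x ∈ s, ∀ m ∈ t, x * m ∈ span R t) :
    span R t = ⊤ := by
  have gen_mul_mem : ∀ x ∈ s, span R t ≤ (span R t).comap (LinearMap.mulLeft R x) :=
    fun x hx => span_le.mpr (mul_mem x hx)
  have mul_mem_span : ∀ a : A, ∀ m ∈ span R t, a * m ∈ span R t := by
    intro a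
    have ha : a ∈ Algebra.adjoin R s := hs ▸ Algebra.mem_top
    induction ha using Algebra.adjoin_induction with
    | mem x hx => exact fun m hm => gen_mul_mem x hx hm
    | algebraMap r => exact fun m hm => by rw [← Algebra.smul_def]; exact smul_mem _ r hm
    | add x y _ _ ihx ihy => exact fun m hm => by rw [add_mul]; exact add_mem (ihx m hm) (ihy m hm)
    | mul x y _ _ ihx ihy => exact fun m hm => by rw [mul_assoc]; exact ihx _ (ihy m hm)
  exact eq_top_iff.mpr fun a _ => by simpa using mul_mem_span a 1 one_mem

theorem FreeAlgebra.adjoin_range_comp_ι_of_surjective {X : Type*} {f : FreeAlgebra R X →ₐ[R] A}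
    (hf : Function.Surjective f) : Algebra.adjoin R (Set.range (f ∘ FreeAlgebra.ι R)) = ⊤ := by
  rw [Set.range_comp, ← AlgHom.map_adjoin, FreeAlgebra.adjoin_range_ι, Algebra.map_top,
    AlgHom.range_eq_top]
  exact hf

end GeneratingSet

section TruncatedPolynomial

variable (R : Type*) [CommSemiring R] (n : ℕ)

/- `Fin (n + 1) → R` is `R[T]/(T^(n+1))` in the monomial basis; `truncShift` is multiplication
by `T` and `truncDeriv` is `d/dT`. -/

def truncShift : Module.End R (Fin (n + 1) → R) where
  toFun u i := if h : 0 < (i : ℕ) then u ⟨i - 1, by omega⟩ else 0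
  map_add' u v := by ext i; dsimp only [Pi.add_apply]; split_ifs <;> simp
  map_smul' c u := by ext i; dsimp only [Pi.smul_apply]; split_ifs <;> simp

def truncDeriv : Module.End R (Fin (n + 1) → R) where
  toFun u i := if h : (i : ℕ) < n then ((i : ℕ) + 1 : R) * u ⟨i + 1, by omega⟩ else 0
  map_add' u v := by ext i; dsimp only [Pi.add_apply]; split_ifs <;> simp [mul_add]
  map_smul' c u := by ext i; dsimp only [Pi.smul_apply]; split_ifs <;> simp [mul_left_comm]

variable {R n}

@[simp] lemma truncShift_apply (u : Fin (n + 1) → R) (i : Fin (n + 1)) :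
    truncShift R n u i = if h : 0 < (i : ℕ) then u ⟨i - 1, by omega⟩ else 0 := rfl

@[simp] lemma truncDeriv_apply (u : Fin (n + 1) → R) (i : Fin (n + 1)) :
    truncDeriv R n u i =
      if h : (i : ℕ) < n then ((i : ℕ) + 1 : R) * u ⟨i + 1, by omega⟩ else 0 := rfl

lemma truncShift_pow_apply (m : ℕ) (u : Fin (n + 1) → R) (i : Fin (n + 1)) :
    (truncShift R n ^ m) u i = if h : m ≤ (i : ℕ) then u ⟨i - m, by omega⟩ else 0 := by
  induction m generalizing i with
  | zero => simp
  | succ m ih =>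
    rcases i with ⟨_ | i, hi⟩
    · simp [pow_succ']
    · simp [pow_succ', ih]

lemma truncShift_pow_succ_self : truncShift R n ^ (n + 1) = 0 :=
  LinearMap.ext fun u => funext fun i => by
    simp [truncShift_pow_apply, Nat.not_le.mpr i.is_lt]

lemma truncShift_pow_single_zero (a : Fin (n + 1)) :
    (truncShift R n ^ (a : ℕ)) (Pi.single 0 1) = Pi.single a 1 := by
  funext i
  rw [truncShift_pow_apply]
  split_ifs with h
  · simp only [Pi.single_apply, Fin.ext_iff, Fin.val_zero]
    congr 1
    simp only [eq_iff_iff]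
    omega
  · simp [Pi.single_apply, Fin.ext_iff]
    omega

lemma truncDeriv_single_zero : truncDeriv R n (Pi.single 0 1) = 0 := by
  funext i
  simp only [truncDeriv_apply, Pi.zero_apply]
  split_ifs
  · rw [Pi.single_eq_of_ne (Fin.ne_of_val_ne (Nat.succ_ne_zero _)), mul_zero]
  · rfl

variable [CharP R 2]

/- At `i = n` the left side is `n * u n`, so this is where `n` has to be odd. -/
lemma truncShift_truncDeriv_add_truncDeriv_truncShift (hn : Odd n) (u : Fin (n + 1) → R) :
    truncShift R n (truncDeriv R n u) + truncDeriv R n (truncShift R n u) = u := by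
  funext i
  rcases i with ⟨_ | i, hi⟩
  · simpa using fun h : n = 0 => absurd hn (by simp [h])
  · simp only [Pi.add_apply, truncShift_apply, truncDeriv_apply, lt_add_iff_pos_left,
      Order.lt_add_one_iff, zero_le, ↓reduceDIte, add_tsub_cancel_right, Nat.cast_add,
      Nat.cast_one, add_pos_iff, Order.lt_two_iff, or_true, dif_pos (Nat.lt_of_succ_lt_succ hi)]
    by_cases h : i + 1 < n
    · rw [dif_pos h]
      calc ((i : R) + 1) * u ⟨i + 1, hi⟩ + ((i : R) + 1 + 1) * u ⟨i + 1, hi⟩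
          = u ⟨i + 1, hi⟩ + ((i + 1 : R) + (i + 1)) * u ⟨i + 1, hi⟩ := by ring
        _ = u ⟨i + 1, hi⟩ := by rw [CharTwo.add_self_eq_zero, zero_mul, add_zero]
    · have hodd : ((i + 1 : ℕ) : R) = 1 := by
        rw [CharTwo.natCast_eq_ite,
          if_neg (Nat.not_even_iff_odd.mpr (by rwa [(by omega : i + 1 = n)]))]
      rw [dif_neg h, add_zero, ← Nat.cast_succ, hodd, one_mul]

lemma truncDeriv_truncDeriv (u : Fin (n + 1) → R) :
    truncDeriv R n (truncDeriv R n u) = 0 := by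
  funext i
  simp only [truncDeriv_apply, Nat.cast_add, Nat.cast_one, mul_dite, mul_zero, Pi.zero_apply,
    dite_eq_right_iff]
  intro _ _
  have heven : ((i : R) + 1) * ((i + 1) + 1) = (((i + 1) * (i + 1 + 1) : ℕ) : R) := by
    push_cast
    ring
  rw [← mul_assoc, heven, CharTwo.natCast_eq_ite, if_pos (Nat.even_mul_succ_self _), zero_mul]

end TruncatedPolynomial

theorem CharTwo.add_self_eq_zero_of_module (R : Type*) {M : Type*} [Semiring R] [CharP R 2]
    [AddCommMonoid M] [Module R M] (x : M) : x + x = 0 := by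
  rw [← two_smul R, CharTwo.two_eq_zero, zero_smul]

section PathModule

variable (R : Type*) [CommSemiring R] (n : ℕ)

/- A pair `(u, v)` stands for `u + v S` in `R[T]/(T^(n+1)) ⊗ Λ[S]`. -/
abbrev PathModule : Type _ := (Fin (n + 1) → R) × (Fin (n + 1) → R)

def pathOpH : Module.End R (PathModule R n) :=
  LinearMap.prodMapAlgHom R _ _ (truncShift R n, truncShift R n)

def pathOpS : Module.End R (PathModule R n) :=
  (truncDeriv R n ∘ₗ LinearMap.fst R _ _).prod
    (LinearMap.fst R _ _ + truncDeriv R n ∘ₗ LinearMap.snd R _ _)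

variable {R n}

lemma pathOpH_apply (x : PathModule R n) :
    pathOpH R n x = (truncShift R n x.1, truncShift R n x.2) := rfl

lemma pathOpS_apply (x : PathModule R n) :
    pathOpS R n x = (truncDeriv R n x.1, x.1 + truncDeriv R n x.2) := rfl

lemma pathOpH_pow_apply (m : ℕ) (x : PathModule R n) :
    (pathOpH R n ^ m) x = ((truncShift R n ^ m) x.1, (truncShift R n ^ m) x.2) := by
  rw [pathOpH, ← map_pow, Prod.pow_mk]
  rfl

lemma pathOpH_pow_succ_self : pathOpH R n ^ (n + 1) = 0 :=
  LinearMap.ext fun x => by simp [pathOpH_pow_apply, truncShift_pow_succ_self]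

variable [CharP R 2]

lemma pathOpH_mul_pathOpS_add_pathOpS_mul_pathOpH_add_one (hn : Odd n) :
    pathOpH R n * pathOpS R n + pathOpS R n * pathOpH R n + 1 = 0 := by
  have leibniz := truncShift_truncDeriv_add_truncDeriv_truncShift (R := R) hn
  have two := CharTwo.add_self_eq_zero_of_module R (M := Fin (n + 1) → R)
  refine LinearMap.ext fun ⟨u, v⟩ => ?_
  simp only [LinearMap.add_apply, Module.End.mul_apply, Module.End.one_apply, pathOpH_apply,
    pathOpS_apply, LinearMap.zero_apply, map_add, Prod.mk_add_mk, Prod.mk_eq_zero]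
  constructor
  · rw [leibniz, two]
  · calc _ = (truncShift R n u + truncShift R n u) +
          ((truncShift R n (truncDeriv R n v) + truncDeriv R n (truncShift R n v)) + v) := by
            abel
      _ = 0 := by rw [leibniz, two, two, zero_add]

lemma pathOpS_mul_self : pathOpS R n * pathOpS R n = 0 :=
  LinearMap.ext fun ⟨u, v⟩ => by
    simp only [Module.End.mul_apply, pathOpS_apply, map_add, truncDeriv_truncDeriv,
      LinearMap.zero_apply, add_zero, CharTwo.add_self_eq_zero_of_module R, Prod.mk_zero_zero]

end PathModule

namespace PathAlg

variable (n : ℕ)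

noncomputable def H : PathAlg n := RingQuot.mkAlgHom (ZMod 2) (pathRel n) genH
noncomputable def S : PathAlg n := RingQuot.mkAlgHom (ZMod 2) (pathRel n) genS
noncomputable def Y : PathAlg n := RingQuot.mkAlgHom (ZMod 2) (pathRel n) genY

noncomputable def monomial (q : Fin (n + 1) × Fin 2 × ℕ) : PathAlg n :=
  RingQuot.mkAlgHom (ZMod 2) (pathRel n) (genH ^ (q.1 : ℕ) * genS ^ (q.2.1 : ℕ) * genY ^ q.2.2)

variable {n}

lemma monomial_eq (q : Fin (n + 1) × Fin 2 × ℕ) :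
    monomial n q = H n ^ (q.1 : ℕ) * S n ^ (q.2.1 : ℕ) * Y n ^ q.2.2 := by
  simp only [monomial, map_mul, map_pow, H, S, Y]

lemma H_mul_S_add_S_mul_H_add_one : H n * S n + S n * H n + 1 = 0 := by
  simpa [H, S] using RingQuot.mkAlgHom_rel (ZMod 2) (pathRel.hs (n := n))

lemma S_mul_H : S n * H n = H n * S n + 1 := by
  rw [← sub_eq_zero, ZModModule.sub_eq_add, ← H_mul_S_add_S_mul_H_add_one]
  abel

lemma commute_Y_H : Commute (Y n) (H n) := by
  have h : H n * Y n + Y n * H n = 0 := by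
    simpa [H, Y] using RingQuot.mkAlgHom_rel (ZMod 2) (pathRel.hy (n := n))
  rw [Commute, SemiconjBy, ← sub_eq_zero, ZModModule.sub_eq_add, add_comm, h]

lemma commute_Y_S : Commute (Y n) (S n) := by
  have h : S n * Y n + Y n * S n = 0 := by
    simpa [S, Y] using RingQuot.mkAlgHom_rel (ZMod 2) (pathRel.sy (n := n))
  rw [Commute, SemiconjBy, ← sub_eq_zero, ZModModule.sub_eq_add, add_comm, h]

lemma S_sq : S n ^ 2 = 0 := by
  simpa [S, sq] using RingQuot.mkAlgHom_rel (ZMod 2) (pathRel.s2 (n := n))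

lemma H_pow_succ_self : H n ^ (n + 1) = 0 := by
  simpa [H] using RingQuot.mkAlgHom_rel (ZMod 2) (pathRel.hpow (n := n))

lemma S_mul_H_pow (a : ℕ) : S n * H n ^ a = H n ^ a * S n + (a : ZMod 2) • H n ^ (a - 1) := by
  induction a with
  | zero => simp
  | succ a ih =>
    have hsmul : (a : ZMod 2) • (H n ^ (a - 1) * H n) = (a : ZMod 2) • H n ^ a := by
      rcases a with _ | a <;> simp [← pow_succ]
    calc S n * H n ^ (a + 1) = S n * H n ^ a * H n := by rw [pow_succ, mul_assoc]
      _ = H n ^ a * (S n * H n) + (a : ZMod 2) • (H n ^ (a - 1) * H n) := by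
        rw [ih, add_mul, mul_assoc, smul_mul_assoc]
      _ = H n ^ (a + 1) * S n + ((a + 1 : ℕ) : ZMod 2) • H n ^ (a + 1 - 1) := by
        rw [hsmul, S_mul_H, mul_add, mul_one, ← mul_assoc, ← pow_succ, Nat.add_sub_cancel,
          Nat.cast_succ, add_smul, one_smul]
        abel

lemma pow_mul_pow_mul_pow_mem_span (a ε k : ℕ) :
    H n ^ a * S n ^ ε * Y n ^ k ∈ Submodule.span (ZMod 2) (Set.range (monomial n)) := by
  by_cases ha : a < n + 1
  · by_cases hε : ε < 2
    · exact Submodule.subset_span ⟨(⟨a, ha⟩, ⟨ε, hε⟩, k), monomial_eq _⟩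
    · simp [pow_eq_zero_of_le (not_lt.mp hε) S_sq]
  · simp [pow_eq_zero_of_le (not_lt.mp ha) H_pow_succ_self]

lemma span_range_monomial : Submodule.span (ZMod 2) (Set.range (monomial n)) = ⊤ := by
  refine Submodule.span_eq_top_of_mul_mem (FreeAlgebra.adjoin_range_comp_ι_of_surjective
      (RingQuot.mkAlgHom_surjective (ZMod 2) (pathRel n)))
    (by simpa using pow_mul_pow_mul_pow_mem_span (n := n) 0 0 0) ?_
  rintro _ ⟨i, rfl⟩ _ ⟨⟨a, ε, k⟩, rfl⟩
  rw [monomial_eq]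
  fin_cases i
  · change H n * _ ∈ _
    rw [← mul_assoc, ← mul_assoc, ← pow_succ']
    exact pow_mul_pow_mul_pow_mem_span _ _ _
  · change S n * _ ∈ _
    rw [← mul_assoc, ← mul_assoc, S_mul_H_pow, add_mul, add_mul, smul_mul_assoc, smul_mul_assoc,
      mul_assoc (H n ^ _), ← pow_succ']
    exact add_mem (pow_mul_pow_mul_pow_mem_span _ _ _)
      (Submodule.smul_mem _ _ (pow_mul_pow_mul_pow_mem_span _ _ _))
  · change Y n * _ ∈ _
    rw [(((commute_Y_H.pow_right _).mul_right (commute_Y_S.pow_right _)).mul_right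
      ((Commute.refl _).pow_right _)).eq, mul_assoc, ← pow_succ]
    exact pow_mul_pow_mul_pow_mem_span _ _ _

end PathAlg

section Representation

open scoped Polynomial

/- `Y` acts by the scalar `X`, so its two commutation relations hold automatically. -/
noncomputable def pathRep (n : ℕ) :
    FreeHSY →ₐ[ZMod 2] Module.End (ZMod 2)[X] (PathModule (ZMod 2)[X] n) :=
  FreeAlgebra.lift (ZMod 2) ![pathOpH _ n, pathOpS _ n, algebraMap (ZMod 2)[X] _ Polynomial.X]

variable {n : ℕ}

@[simp] lemma pathRep_genH : pathRep n genH = pathOpH _ n := by simp [pathRep, genH]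

@[simp] lemma pathRep_genS : pathRep n genS = pathOpS _ n := by simp [pathRep, genS]

@[simp] lemma pathRep_genY : pathRep n genY = algebraMap (ZMod 2)[X] _ Polynomial.X := by
  simp [pathRep, genY]

lemma pathRep_rel (hn : Odd n) ⦃x y : FreeHSY⦄ (h : pathRel n x y) :
    pathRep n x = pathRep n y := by
  cases h with
  | hs => simpa using pathOpH_mul_pathOpS_add_pathOpS_mul_pathOpH_add_one hn
  | hy => simp [← Algebra.commutes Polynomial.X (pathOpH _ n), ZModModule.add_self]
  | sy => simp [← Algebra.commutes Polynomial.X (pathOpS _ n), ZModModule.add_self]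
  | s2 => simpa using pathOpS_mul_self
  | hpow => simpa using pathOpH_pow_succ_self

noncomputable def PathAlg.rep (hn : Odd n) :
    PathAlg n →ₐ[ZMod 2] Module.End (ZMod 2)[X] (PathModule (ZMod 2)[X] n) :=
  RingQuot.liftAlgHom (ZMod 2) ⟨pathRep n, pathRep_rel hn⟩

variable (n) in
noncomputable def pathBasis :
    Module.Basis ((Fin (n + 1) ⊕ Fin (n + 1)) × ℕ) (ZMod 2) (PathModule (ZMod 2)[X] n) :=
  (Polynomial.basisMonomials (ZMod 2)).smulTower' ((Pi.basisFun _ _).prod (Pi.basisFun _ _))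

def pathBasisIndex (q : Fin (n + 1) × Fin 2 × ℕ) : (Fin (n + 1) ⊕ Fin (n + 1)) × ℕ :=
  (if q.2.1 = 0 then .inl q.1 else .inr q.1, q.2.2)

lemma pathBasisIndex_injective : Function.Injective (pathBasisIndex (n := n)) := by
  rintro ⟨a, ε, k⟩ ⟨a', ε', k'⟩ h
  fin_cases ε <;> fin_cases ε' <;> simp_all [pathBasisIndex]

lemma PathAlg.rep_monomial_apply (hn : Odd n) (q : Fin (n + 1) × Fin 2 × ℕ) :
    PathAlg.rep hn (PathAlg.monomial n q) (Pi.single 0 1, 0) =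
      pathBasis n (pathBasisIndex q) := by
  obtain ⟨a, ε, k⟩ := q
  rw [PathAlg.monomial, PathAlg.rep, RingQuot.liftAlgHom_mkAlgHom_apply]
  simp only [map_mul, map_pow, pathRep_genH, pathRep_genS, pathRep_genY, Module.End.mul_apply]
  rw [← map_pow, Module.algebraMap_end_apply]
  fin_cases ε <;>
    simp [pathOpH_pow_apply, pathOpS_apply, truncShift_pow_single_zero, truncDeriv_single_zero,
      pathBasis, pathBasisIndex, Module.Basis.smulTower'_apply, Polynomial.X_pow_eq_monomial]

lemma PathAlg.linearIndependent_monomial (hn : Odd n) :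
    LinearIndependent (ZMod 2) (PathAlg.monomial n) := by
  let eval := LinearMap.applyₗ' (ZMod 2) (Pi.single 0 1, 0) ∘ₗ (PathAlg.rep hn).toLinearMap
  have h : eval ∘ PathAlg.monomial n = pathBasis n ∘ pathBasisIndex :=
    funext (PathAlg.rep_monomial_apply hn)
  refine LinearIndependent.of_comp eval ?_
  rw [h]
  exact (pathBasis n).linearIndependent.comp _ pathBasisIndex_injective

end Representation

/-- For `n ≡ 3 (mod 4)`, the images in `A` of the monomials `H^a S^ε Y^k`, for
`0 ≤ a ≤ n`, `ε ∈ {0,1}`, `k ≥ 0`, form a basis of `A` as a `ℤ/2`-vector space. -/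
theorem stmt_13 (n : ℕ) (hn : n % 4 = 3) :
    LinearIndependent (ZMod 2)
      (fun q : Fin (n + 1) × Fin 2 × ℕ =>
        RingQuot.mkAlgHom (ZMod 2) (pathRel n)
          (genH ^ (q.1 : ℕ) * genS ^ (q.2.1 : ℕ) * genY ^ q.2.2)) ∧
    Submodule.span (ZMod 2)
      (Set.range (fun q : Fin (n + 1) × Fin 2 × ℕ =>
        RingQuot.mkAlgHom (ZMod 2) (pathRel n)
          (genH ^ (q.1 : ℕ) * genS ^ (q.2.1 : ℕ) * genY ^ q.2.2))) = ⊤ :=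
  ⟨PathAlg.linearIndependent_monomial (Nat.odd_iff.mpr (by omega)), PathAlg.span_range_monomial⟩
end
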